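/- For q odd and n even, S(n−1; n) = −π_q(n)·q^{(n−2)/2}, where S(β; n) = Σ_{P monic irreducible of degree n} Σ_{B monic of degree β} (B/P). -/

import Mathlib

open Polynomial
open scoped Classical

/-- The quadratic residue symbol `(B/P)` for `P` a monic irreducible polynomial:
`0` if `P ∣ B`, `1` if `B` is a nonzero square modulo `P`, and `-1` otherwise. -/
noncomputable def legendreSymbol {F : Type*} [Field F] (B P : F[X]) : ℤ :=
  if P ∣ B then 0 else if ∃ C : F[X], P ∣ (C ^ 2 - B) then 1 else -1

/-- The double character sum
`S(β; n) = Σ_{P monic irreducible, deg P = n} Σ_{B monic, deg B = β} (B/P)`. -/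
noncomputable def doubleCharSum (F : Type*) [Field F] (β n : ℕ) : ℤ :=
  ∑ᶠ P ∈ {P : F[X] | P.Monic ∧ Irreducible P ∧ P.natDegree = n},
    ∑ᶠ B ∈ {B : F[X] | B.Monic ∧ B.natDegree = β}, legendreSymbol B P

/-- `π_q(n)`, the number of monic irreducible polynomials of degree `n`. -/
noncomputable def primeCount (F : Type*) [Field F] (n : ℕ) : ℕ :=
  {P : F[X] | P.Monic ∧ Irreducible P ∧ P.natDegree = n}.ncard

/-!
Fix `P` monic irreducible of degree `2m` and let `ℓ` be the `F`-linear form on `K = F[X]/(P)`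
reading off the coefficient of `X^(2m-1)` of the reduced representative. The monic `B` of degree
`2m - 1` are exactly the representatives of the `x ∈ K` with `ℓ x = 1`, and `(B/P)` is the
quadratic character of the field `K`. Counting square roots, the inner sum is
`#{y | ℓ (y²) = 1} - #{x | ℓ x = 1}`, and the second count is `q^(2m-1)`. For the first, write
`y = a + X^m b` with `deg a, deg b < m`: since `ℓ (a²) = 0`, `ℓ (y²) = ℓ (2 X^m b a) + ℓ (X^(2m) b²)`
is affine in `a`, and its linear part is nonzero when `b ≠ 0` (take `a = X^(m-1-deg b)`).
Hence `#{y | ℓ (y²) = 1} = (q^m - 1) q^(m-1)`, and every inner sum equals `-q^(m-1)`.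
-/

open Finset

theorem finsum_mem_const {α M : Type*} [AddCommMonoid M] (s : Set α) (c : M) :
    ∑ᶠ _ ∈ s, c = s.ncard • c := by
  rcases s.finite_or_infinite with hs | hs
  · rw [finsum_mem_eq_finite_toFinset_sum _ hs, Finset.sum_const, Set.ncard_eq_toFinset_card _ hs]
  · rcases eq_or_ne c 0 with rfl | hc
    · simp
    · rw [hs.ncard, zero_smul]
      exact finsum_mem_eq_zero_of_infinite (by simpa [Function.support_const hc])

theorem FiniteField.ringChar_ne_two_of_odd_card {K : Type*} [Field K] [Fintype K]
    (hK : Odd (Fintype.card K)) : ringChar K ≠ 2 :=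
  FiniteField.even_card_iff_char_two.not.mpr (by rw [Nat.odd_iff.mp hK]; exact one_ne_zero)

theorem LinearMap.card_fiber_mul_card_eq_card {F V : Type*} [Field F] [Fintype F]
    [AddCommGroup V] [Module F V] [Fintype V] {f : V →ₗ[F] F} (hf : f ≠ 0) (t : F) :
    #{v | f v = t} * Fintype.card F = Fintype.card V := by
  obtain ⟨v, hv⟩ : ∃ v, f v ≠ 0 := by simpa [LinearMap.ext_iff] using hf
  have hsurj (s : F) : s ∈ Set.range f := ⟨(s / f v) • v, by simp [hv]⟩
  calc #{v | f v = t} * Fintype.card F = ∑ s : F, #{v | f v = s} := by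
        rw [mul_comm, ← smul_eq_mul, ← card_univ, ← sum_const]
        exact sum_congr rfl fun s _ => AddMonoidHom.card_fiber_eq_of_mem_range f (hsurj t) (hsurj s)
    _ = Fintype.card V := (card_eq_sum_card_fiberwise (f := f) (t := univ) (by simp)).symm

theorem sum_quadraticChar_eq_card_sub_card {K : Type*} [Field K] [Fintype K] [DecidableEq K]
    (hK : ringChar K ≠ 2) (T : Finset K) :
    ∑ x ∈ T, quadraticChar K x = #{y | y ^ 2 ∈ T} - #T := by
  have hfib : #{y | y ^ 2 ∈ T} = ∑ x ∈ T, #{y | y ^ 2 = x} := by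
    rw [card_eq_sum_card_fiberwise (f := (· ^ 2)) fun y hy => by simpa using hy]
    refine sum_congr rfl fun x hx => congrArg card ?_
    rw [filter_filter]
    exact filter_congr fun y _ => and_iff_right_of_imp fun h => h ▸ hx
  rw [hfib, Nat.cast_sum, card_eq_sum_ones T, Nat.cast_sum, ← sum_sub_distrib]
  refine sum_congr rfl fun x _ => ?_
  rw [Nat.cast_one, eq_sub_iff_add_eq, ← quadraticChar_card_sqrts hK x, Set.toFinset_ofPred]

theorem card_sq_fiber_mul_card_eq_of_lagrangian {F U A : Type*} [Field F] [Fintype F]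
    [AddCommGroup U] [Module F U] [Fintype U] [CommRing A] [Algebra F A] [Fintype A]
    (ℓ : A →ₗ[F] F) (ι κ : U →ₗ[F] A) (hbij : Function.Bijective fun p : U × U => ι p.1 + κ p.2)
    (h2 : (2 : F) ≠ 0) (hiso : ∀ a, ℓ (ι a ^ 2) = 0) (hnd : ∀ b ≠ 0, ∃ a, ℓ (κ b * ι a) ≠ 0)
    {c : F} (hc : c ≠ 0) :
    #{y | ℓ (y ^ 2) = c} * Fintype.card F = (Fintype.card U - 1) * Fintype.card U := by
  have hQ (a b : U) : ℓ ((ι a + κ b) ^ 2) = ℓ (2 * κ b * ι a) + ℓ (κ b ^ 2) := by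
    rw [show (ι a + κ b) ^ 2 = ι a ^ 2 + 2 * κ b * ι a + κ b ^ 2 by ring, map_add, map_add,
      hiso, zero_add]
  have hℓ2 (y : A) : 2 * ℓ y = ℓ (2 * y) := by rw [two_mul, two_mul, map_add]
  have hfiber (b : U) : #{a | ℓ ((ι a + κ b) ^ 2) = c} * Fintype.card F =
      if b = 0 then 0 else Fintype.card U := by
    split_ifs with hb
    · subst hb
      simp [hiso, hc.symm]
    · obtain ⟨a₀, ha₀⟩ := hnd b hb
      have hf : ℓ ∘ₗ LinearMap.mulLeft F (2 * κ b) ∘ₗ ι ≠ 0 := fun h =>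
        mul_ne_zero h2 ha₀ (by
          rw [hℓ2, ← mul_assoc]; exact LinearMap.congr_fun h a₀)
      rw [← LinearMap.card_fiber_mul_card_eq_card hf (c - ℓ (κ b ^ 2))]
      simp only [hQ, LinearMap.comp_apply, LinearMap.mulLeft_apply, eq_sub_iff_add_eq]
  rw [← map_univ_equiv (Equiv.ofBijective _ hbij), filter_map, card_map, card_filter,
    Fintype.sum_prod_type_right, sum_mul]
  simp only [← card_filter, Function.comp_apply, Equiv.coe_toEmbedding, Equiv.ofBijective_apply]
  rw [sum_congr rfl fun b _ => hfiber b, sum_ite, sum_const_zero, zero_add, sum_const, smul_eq_mul,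
    filter_ne', card_erase_of_mem (mem_univ _), card_univ]

theorem Polynomial.monic_and_natDegree_eq_iff_coeff_eq_one {R : Type*} [Semiring R] [Nontrivial R]
    {f : R[X]} {k : ℕ} (hf : f.degree ≤ k) : f.Monic ∧ f.natDegree = k ↔ f.coeff k = 1 := by
  refine ⟨fun ⟨hm, hk⟩ => hk ▸ hm.coeff_natDegree, fun h => ⟨monic_of_degree_le k hf h, ?_⟩⟩
  exact natDegree_eq_of_le_of_coeff_ne_zero (natDegree_le_of_degree_le hf) (h ▸ one_ne_zero)

namespace AdjoinRoot

variable {F : Type*} [Field F] {P : F[X]}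

noncomputable def topCoeff (hP : P.Monic) : AdjoinRoot P →ₗ[F] F :=
  lcoeff F (P.natDegree - 1) ∘ₗ modByMonicHom hP

theorem topCoeff_apply (hP : P.Monic) (x : AdjoinRoot P) :
    topCoeff hP x = (modByMonicHom hP x).coeff (P.natDegree - 1) := rfl

theorem topCoeff_mk (hP : P.Monic) {f : F[X]} (hf : f.natDegree < P.natDegree) :
    topCoeff hP (mk P f) = f.coeff (P.natDegree - 1) := by
  rw [topCoeff_apply, modByMonicHom_mk, (modByMonic_eq_self_iff hP).mpr (degree_lt_degree hf)]

theorem topCoeff_mk_mul_X_pow (hP : P.Monic) {b : F[X]} {k : ℕ}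
    (h : b.natDegree + k + 1 = P.natDegree) : topCoeff hP (mk P (b * X ^ k)) = b.leadingCoeff := by
  rw [topCoeff_mk hP (natDegree_mul_le.trans_lt (by rw [natDegree_X_pow]; omega)),
    show P.natDegree - 1 = b.natDegree + k by omega, coeff_mul_X_pow, leadingCoeff]

theorem mk_injOn_degree_lt (hP : P.Monic) : Set.InjOn (mk P) {f | f.degree < P.degree} :=
  fun f hf g hg h => by
    simpa [modByMonicHom_mk, (modByMonic_eq_self_iff hP).mpr hf,
      (modByMonic_eq_self_iff hP).mpr hg] using congrArg (modByMonicHom hP) h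

theorem bijective_mk_degreeLT (hP : P.Monic) {n : ℕ} (hn : P.natDegree = n) :
    Function.Bijective fun f : F[X]_n => mk P f := by
  have hdeg (f : F[X]_n) : (f : F[X]).degree < P.degree := by
    rw [degree_eq_natDegree hP.ne_zero, hn]; exact mem_degreeLT.mp f.2
  refine ⟨fun f g h => Subtype.ext (mk_injOn_degree_lt hP (hdeg f) (hdeg g) h), fun x => ?_⟩
  obtain ⟨f, rfl⟩ := mk_surjective x
  refine ⟨⟨f %ₘ P, mem_degreeLT.mpr ?_⟩, mk_leftInverse hP (mk P f)⟩
  rw [← hn, ← degree_eq_natDegree hP.ne_zero]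
  exact degree_modByMonic_lt f hP

theorem card_eq_card_pow_natDegree [Fintype F] [Fintype (AdjoinRoot P)] (hP : P.Monic) :
    Fintype.card (AdjoinRoot P) = Fintype.card F ^ P.natDegree := by
  rw [Module.card_eq_pow_finrank (K := F), (powerBasis' hP).finrank, powerBasis'_dim]

theorem bijOn_mk_monic (hP : P.Monic) (hP0 : 0 < P.natDegree) :
    Set.BijOn (mk P) {B | B.Monic ∧ B.natDegree = P.natDegree - 1} {x | topCoeff hP x = 1} := by
  obtain ⟨k, hk⟩ : ∃ k, P.natDegree = k + 1 := ⟨_, (Nat.succ_pred_eq_of_pos hP0).symm⟩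
  have hlt {B : F[X]} (hB : B.natDegree = k) : B.degree < P.degree := degree_lt_degree (by omega)
  simp only [hk, Nat.add_sub_cancel]
  refine ⟨fun B ⟨hBm, hBk⟩ => ?_, fun B hB B' hB' h => mk_injOn_degree_lt hP (hlt hB.2) (hlt hB'.2) h,
    fun x hx => ?_⟩
  · simp only [Set.mem_ofPred_eq, topCoeff_mk hP (by omega : B.natDegree < P.natDegree), hk,
      Nat.add_sub_cancel, ← hBk]
    exact hBm.coeff_natDegree
  · obtain ⟨f, rfl⟩ := mk_surjective x
    have hr : (f %ₘ P).degree ≤ k := Order.le_of_lt_succ (by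
      simpa [degree_eq_natDegree hP.ne_zero, hk] using degree_modByMonic_lt f hP :
        (f %ₘ P).degree < (k + 1 : ℕ))
    refine ⟨f %ₘ P, ?_, mk_leftInverse hP (mk P f)⟩
    rw [Set.mem_ofPred, monic_and_natDegree_eq_iff_coeff_eq_one hr]
    simpa [topCoeff_apply, hk] using hx

theorem topCoeff_ne_zero (hP : P.Monic) (hP0 : 0 < P.natDegree) : topCoeff hP ≠ 0 := fun h =>
  zero_ne_one (α := F) (by simpa [h] using
    (bijOn_mk_monic hP hP0).mapsTo ⟨monic_X_pow (R := F) (P.natDegree - 1), natDegree_X_pow _⟩)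

theorem legendreSymbol_eq_quadraticChar [Fact (Irreducible P)] [Fintype (AdjoinRoot P)]
    (B : F[X]) : legendreSymbol B P = quadraticChar (AdjoinRoot P) (mk P B) := by
  have hsq : IsSquare (mk P B) ↔ ∃ C, P ∣ C ^ 2 - B := by
    constructor
    · rintro ⟨r, hr⟩
      obtain ⟨C, rfl⟩ := mk_surjective r
      exact ⟨C, mk_eq_mk.mp (by rw [map_pow, sq, hr])⟩
    · rintro ⟨C, hC⟩
      exact ⟨mk P C, by rw [← map_mul, ← sq, mk_eq_mk.mpr hC]⟩
  simp only [legendreSymbol, quadraticChar_apply, quadraticCharFun, mk_eq_zero, hsq]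

theorem card_topCoeff_sq_eq_one_mul_card [Fintype F] [Fintype (AdjoinRoot P)] (hP : P.Monic)
    (h2 : (2 : F) ≠ 0) {m : ℕ} (hm : 0 < m) (hPm : P.natDegree = 2 * m) :
    #{y : AdjoinRoot P | topCoeff hP (y ^ 2) = 1} * Fintype.card F =
      (Fintype.card F ^ m - 1) * Fintype.card F ^ m := by
  let := Fintype.ofEquiv _ (degreeLTEquiv F m).symm.toEquiv
  have hU : Fintype.card (F[X]_m) = Fintype.card F ^ m := by
    rw [Fintype.card_congr (degreeLTEquiv F m).toEquiv, Fintype.card_fun, Fintype.card_fin]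
  have hnat (a : F[X]_m) : (a : F[X]).natDegree < m := by
    rcases eq_or_ne (a : F[X]) 0 with h | h
    · simp [h, hm]
    · exact (natDegree_lt_iff_degree_lt h).mpr (mem_degreeLT.mp a.2)
  let μ := (aeval (R := F) (root P)).toLinearMap
  rw [← hU]
  refine card_sq_fiber_mul_card_eq_of_lagrangian (topCoeff hP) (μ ∘ₗ (F[X]_m).subtype)
    (μ ∘ₗ LinearMap.mulLeft F (X ^ m) ∘ₗ (F[X]_m).subtype) ?_ h2 (fun a => ?_) (fun b hb => ?_)
    one_ne_zero
  · convert (bijective_mk_degreeLT hP (hPm.trans (two_mul m))).comp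
      (degreeLT.addLinearEquiv F m m).symm.bijective using 1
    ext p
    simp [μ, aeval_eq, degreeLT.addLinearEquiv_symm_apply']
  · have ha : ((a : F[X]) ^ 2).natDegree < 2 * m - 1 :=
      natDegree_pow_le.trans_lt (by have := hnat a; omega)
    simp only [LinearMap.comp_apply, μ, AlgHom.toLinearMap_apply, aeval_eq, ← map_pow,
      Submodule.subtype_apply]
    rw [topCoeff_mk hP (by omega), hPm, coeff_eq_zero_of_natDegree_lt ha]
  · have hb0 : (b : F[X]) ≠ 0 := by simpa using hb
    have hd := hnat b
    refine ⟨⟨X ^ (m - 1 - (b : F[X]).natDegree), mem_degreeLT.mpr ?_⟩, ?_⟩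
    · rw [degree_X_pow]; exact_mod_cast (by omega : m - 1 - (b : F[X]).natDegree < m)
    simp only [LinearMap.comp_apply, μ, AlgHom.toLinearMap_apply, aeval_eq, ← map_mul,
      Submodule.subtype_apply, LinearMap.mulLeft_apply, mul_comm (X ^ m), mul_assoc, ← pow_add]
    rw [topCoeff_mk_mul_X_pow hP (by omega)]
    exact leadingCoeff_ne_zero.mpr hb0

end AdjoinRoot

open AdjoinRoot in
theorem finsum_legendreSymbol_monic_eq_neg_pow {F : Type*} [Field F] [Fintype F]
    (hq : Odd (Fintype.card F)) {P : F[X]} (hP : P.Monic) (hirr : Irreducible P) {m : ℕ}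
    (hPm : P.natDegree = 2 * m) :
    ∑ᶠ B ∈ {B : F[X] | B.Monic ∧ B.natDegree = 2 * m - 1}, legendreSymbol B P =
      -(Fintype.card F : ℤ) ^ (m - 1) := by
  have := Fact.mk hirr
  have := hP.finite_adjoinRoot
  have := Module.finite_of_finite F (M := AdjoinRoot P)
  let := Fintype.ofFinite (AdjoinRoot P)
  have hP0 := hirr.natDegree_pos
  have hK := card_eq_card_pow_natDegree hP
  have hN := card_topCoeff_sq_eq_one_mul_card hP
    (Ring.two_ne_zero (FiniteField.ringChar_ne_two_of_odd_card hq)) (by omega) hPm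
  have hM := LinearMap.card_fiber_mul_card_eq_card (topCoeff_ne_zero hP hP0) 1
  rw [← hPm, finsum_mem_eq_of_bijOn _ (bijOn_mk_monic hP hP0)
    fun B _ => legendreSymbol_eq_quadraticChar B, finsum_mem_eq_toFinset_sum,
    sum_quadraticChar_eq_card_sub_card
      (FiniteField.ringChar_ne_two_of_odd_card (hK ▸ hq.pow))]
  simp only [Set.toFinset_ofPred, mem_filter, mem_univ, true_and]
  obtain ⟨k, rfl⟩ : ∃ k, m = k + 1 := ⟨m - 1, by omega⟩
  have hq1 : 1 ≤ Fintype.card F ^ (k + 1) := Nat.one_le_pow _ _ Fintype.card_pos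
  rw [hK, hPm] at hM
  zify [hq1] at hN hM
  refine mul_right_cancel₀ (Nat.cast_ne_zero.mpr (Fintype.card_ne_zero (α := F))) ?_
  rw [Nat.add_sub_cancel]
  linear_combination hN - hM

/-- For `q` odd and `n` even, `S(n-1; n) = -π_q(n) q^{(n-2)/2}`. -/
theorem doubleCharSum_top_even (F : Type*) [Field F] [Fintype F]
    (hq : Odd (Fintype.card F)) (n : ℕ) (heven : Even n) :
    doubleCharSum F (n - 1) n =
      -((primeCount F n : ℤ) * (Fintype.card F : ℤ) ^ ((n - 2) / 2)) := by
  obtain ⟨m, rfl⟩ := heven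
  rw [doubleCharSum, primeCount, ← nsmul_eq_mul, ← smul_neg, ← finsum_mem_const]
  refine finsum_mem_congr rfl fun P ⟨hP, hirr, hPm⟩ => ?_
  rw [show m + m - 1 = 2 * m - 1 by omega, show (m + m - 2) / 2 = m - 1 by omega]
  exact finsum_legendreSymbol_monic_eq_neg_pow hq hP hirr (by omega)
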